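/- Let γ > 0, 0 < α < 1, and let l ≥ 0 be an integer. For all j ≥ 1, |F_{j+l}/F_j − 1| ≤ αγ²l / ([1+(j+l)γ]·[1−α(1+γ)+jγ(1−α)]) whenever the second bracket is positive; in particular |F_{j+l}/F_j − 1| = O(j^(−2)) as j → ∞, and the infinite product ∏_{j≥1} F_{j+l}/F_j converges. -/

import Mathlib

/-!
With `w(u) = (1 - α u)^(-γ-1)` one has `∫₀¹ w = ((1 - α)^(-γ) - 1) / (α γ)`, so
`F_j = 1 + α γ ∫₀¹ (1 - u^(jγ)) w(u) du`: thus `F_j ≥ 1` and `F_j` increases with `j`.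
Since `0 ≤ w ≤ (1 - α)^(-γ-1)` on `[0, 1]`, comparing with `∫₀¹ u^c = 1 / (c + 1)` gives
`F_{j+l} - F_j ≤ α γ (1 - α)^(-γ-1) l γ / ((1 + jγ)(1 + (j+l)γ))` and
`F_j ≥ (1 - α)^(-γ-1) (1 - α - α γ / (1 + jγ))`; the quotient is the stated bound.
Dividing by `F_j ≥ 1` instead gives `O(j⁻²)` for every `j ≥ 1`, so the logarithms of the
factors are summable and the product converges to a nonzero limit.
-/

open MeasureTheory Real Filter

theorem setIntegral_mul_le_mul_setIntegral {X : Type*} [MeasurableSpace X] {μ : Measure X}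
    {s : Set X} {g w : X → ℝ} {A : ℝ} (hs : MeasurableSet s) (hg : IntegrableOn g s μ)
    (hgw : IntegrableOn (fun x => g x * w x) s μ) (hg0 : ∀ x ∈ s, 0 ≤ g x)
    (hwA : ∀ x ∈ s, w x ≤ A) :
    ∫ x in s, g x * w x ∂μ ≤ A * ∫ x in s, g x ∂μ := by
  rw [← integral_const_mul]
  refine setIntegral_mono_on hgw (hg.const_mul A) hs fun x hx => ?_
  rw [mul_comm A]
  exact mul_le_mul_of_nonneg_left (hwA x hx) (hg0 x hx)

theorem integral_Ioo_zero_one_rpow {c : ℝ} (hc : -1 < c) :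
    ∫ u in Set.Ioo (0 : ℝ) 1, u ^ c = 1 / (c + 1) := by
  rw [← integral_Ioc_eq_integral_Ioo, ← intervalIntegral.integral_of_le zero_le_one,
    integral_rpow (Or.inl hc), one_rpow, zero_rpow (by linarith), sub_zero]

theorem integral_Ioo_zero_one_rpow_sub_rpow {c d : ℝ} (hc : 0 ≤ c) (hd : 0 ≤ d) :
    ∫ u in Set.Ioo (0 : ℝ) 1, (u ^ c - u ^ d) = (d - c) / ((c + 1) * (d + 1)) := by
  have hint : ∀ {e : ℝ}, 0 ≤ e → IntegrableOn (fun u : ℝ => u ^ e) (Set.Ioo 0 1) := fun he =>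
    (continuous_rpow_const he).continuousOn.integrableOn_Icc.mono_set Set.Ioo_subset_Icc_self
  rw [integral_sub (hint hc) (hint hd), integral_Ioo_zero_one_rpow (by linarith),
    integral_Ioo_zero_one_rpow (by linarith)]
  field_simp
  ring

theorem abs_div_sub_one_le {x y D L : ℝ} (hL : 0 < L) (hLy : L ≤ y) (hxy : 0 ≤ x - y)
    (hD : x - y ≤ D) : |x / y - 1| ≤ D / L := by
  have hy : 0 < y := hL.trans_le hLy
  rw [div_sub_one hy.ne', abs_of_nonneg (div_nonneg hxy hy.le)]
  exact div_le_div₀ (hxy.trans hD) hD hL hLy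

theorem exists_tendsto_prod_range_ne_zero {r : ℕ → ℝ} (hr : ∀ n, 0 < r n)
    (hs : Summable fun n => r n - 1) :
    ∃ P : ℝ, P ≠ 0 ∧ Tendsto (fun N => ∏ n ∈ Finset.range N, r n) atTop (nhds P) := by
  have hlog : Summable fun n => log (r n) := by
    simpa using Real.summable_log_one_add_of_summable hs
  exact ⟨_, (exp_pos _).ne', (Real.hasProd_of_hasSum_log hr hlog.hasSum).tendsto_prod_nat⟩

theorem exists_tendsto_prod_Icc_one_ne_zero {r : ℕ → ℝ} {C : ℝ} (hr : ∀ n, 1 ≤ n → 0 < r n)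
    (hC : ∀ n, 1 ≤ n → |r n - 1| ≤ C / (n : ℝ) ^ 2) :
    ∃ P : ℝ, P ≠ 0 ∧ Tendsto (fun N => ∏ n ∈ Finset.Icc 1 N, r n) atTop (nhds P) := by
  have hsq : Summable fun n : ℕ => C / ((n + 1 : ℕ) : ℝ) ^ 2 := by
    have := (Real.summable_one_div_nat_pow.2 one_lt_two).mul_left C
    exact (summable_nat_add_iff 1).2 (by simpa [div_eq_mul_inv] using this)
  have hs : Summable fun n => r (n + 1) - 1 :=
    hsq.of_norm_bounded fun n => hC (n + 1) (Nat.le_add_left 1 n)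
  obtain ⟨P, hP, hlim⟩ :=
    exists_tendsto_prod_range_ne_zero (fun n => hr (n + 1) (Nat.le_add_left 1 n)) hs
  refine ⟨P, hP, hlim.congr fun N => ?_⟩
  rw [← Finset.Ico_add_one_right_eq_Icc, Finset.prod_Ico_eq_prod_range]
  simp [add_comm]

noncomputable def weight (α γ u : ℝ) : ℝ := (1 - α * u) ^ (-γ - 1)

section weight

variable {α γ : ℝ}

theorem one_sub_mul_pos (hα1 : α < 1) {u : ℝ} (hu : u ∈ Set.Icc (0 : ℝ) 1) : 0 < 1 - α * u := by
  obtain ⟨h0, h1⟩ := hu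
  rcases le_total 0 α with hα | hα <;> nlinarith

theorem continuousOn_weight (hα1 : α < 1) : ContinuousOn (weight α γ) (Set.Icc 0 1) :=
  ContinuousOn.rpow_const (by fun_prop) fun _ hu => Or.inl (one_sub_mul_pos hα1 hu).ne'

theorem weight_nonneg (hα1 : α < 1) {u : ℝ} (hu : u ∈ Set.Icc (0 : ℝ) 1) : 0 ≤ weight α γ u :=
  rpow_nonneg (one_sub_mul_pos hα1 hu).le _

theorem weight_le (hα : 0 ≤ α) (hα1 : α < 1) (hγ : -1 ≤ γ) {u : ℝ}
    (hu : u ∈ Set.Icc (0 : ℝ) 1) : weight α γ u ≤ (1 - α) ^ (-γ - 1) :=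
  rpow_le_rpow_of_nonpos (by linarith) (by nlinarith [hu.2]) (by linarith)

theorem integrableOn_mul_weight (hα1 : α < 1) {g : ℝ → ℝ} (hg : ContinuousOn g (Set.Icc 0 1)) :
    IntegrableOn (fun u => g u * weight α γ u) (Set.Ioo 0 1) :=
  (hg.mul (continuousOn_weight hα1)).integrableOn_Icc.mono_set Set.Ioo_subset_Icc_self

theorem integral_mul_weight_le (hα : 0 ≤ α) (hα1 : α < 1) (hγ : -1 ≤ γ) {g : ℝ → ℝ}
    (hg : ContinuousOn g (Set.Icc 0 1)) (hg0 : ∀ u ∈ Set.Ioo (0 : ℝ) 1, 0 ≤ g u) :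
    ∫ u in Set.Ioo (0 : ℝ) 1, g u * weight α γ u ≤
      (1 - α) ^ (-γ - 1) * ∫ u in Set.Ioo (0 : ℝ) 1, g u :=
  setIntegral_mul_le_mul_setIntegral measurableSet_Ioo
    (hg.integrableOn_Icc.mono_set Set.Ioo_subset_Icc_self) (integrableOn_mul_weight hα1 hg) hg0
    fun _ hu => weight_le hα hα1 hγ (Set.Ioo_subset_Icc_self hu)

theorem integral_weight (hα : α ≠ 0) (hα1 : α < 1) (hγ : γ ≠ 0) :
    ∫ u in Set.Ioo (0 : ℝ) 1, weight α γ u = ((1 - α) ^ (-γ) - 1) / (α * γ) := by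
  have hderiv : ∀ u ∈ Set.uIcc (0 : ℝ) 1,
      HasDerivAt (fun v => (1 - α * v) ^ (-γ) / (α * γ)) (weight α γ u) u := by
    intro u hu
    rw [Set.uIcc_of_le zero_le_one] at hu
    have hlin : HasDerivAt (fun v => 1 - α * v) (-α) u := by
      simpa using ((hasDerivAt_id u).const_mul α).const_sub 1
    refine ((hlin.rpow_const (Or.inl (one_sub_mul_pos hα1 hu).ne')).div_const (α * γ)
      ).congr_deriv ?_
    rw [weight]
    field_simp
  rw [← integral_Ioc_eq_integral_Ioo, ← intervalIntegral.integral_of_le zero_le_one,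
    intervalIntegral.integral_eq_sub_of_hasDerivAt hderiv
      ((continuousOn_weight hα1).mono (Set.uIcc_of_le zero_le_one).subset |>.intervalIntegrable)]
  simp only [mul_one, mul_zero, sub_zero, one_rpow]
  ring

end weight

/-- `F_j = interpF α γ (j * γ)`. -/
noncomputable def interpF (α γ x : ℝ) : ℝ :=
  (1 - α) ^ (-γ) - α * γ * ∫ u in Set.Ioo (0 : ℝ) 1, u ^ x * weight α γ u

section interpF

variable {α γ c d : ℝ}

theorem interpF_zero (hα : α ≠ 0) (hα1 : α < 1) (hγ : γ ≠ 0) : interpF α γ 0 = 1 := by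
  simp only [interpF, rpow_zero, one_mul, integral_weight hα hα1 hγ]
  field_simp
  ring

theorem interpF_sub_interpF (hα1 : α < 1) (hc : 0 ≤ c) (hd : 0 ≤ d) :
    interpF α γ d - interpF α γ c =
      α * γ * ∫ u in Set.Ioo (0 : ℝ) 1, (u ^ c - u ^ d) * weight α γ u := by
  simp only [interpF, sub_mul]
  rw [integral_sub (integrableOn_mul_weight hα1 (continuous_rpow_const hc).continuousOn)
    (integrableOn_mul_weight hα1 (continuous_rpow_const hd).continuousOn)]
  ring

theorem interpF_sub_interpF_nonneg (hα : 0 ≤ α) (hα1 : α < 1) (hγ : 0 ≤ γ) (hc : 0 ≤ c)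
    (hcd : c ≤ d) : 0 ≤ interpF α γ d - interpF α γ c := by
  rw [interpF_sub_interpF hα1 hc (hc.trans hcd)]
  refine mul_nonneg (mul_nonneg hα hγ) (setIntegral_nonneg measurableSet_Ioo fun u hu => ?_)
  exact mul_nonneg (sub_nonneg.2 (rpow_le_rpow_of_exponent_ge hu.1 hu.2.le hcd))
    (weight_nonneg hα1 (Set.Ioo_subset_Icc_self hu))

theorem interpF_sub_interpF_le (hα : 0 ≤ α) (hα1 : α < 1) (hγ : 0 ≤ γ) (hc : 0 ≤ c)
    (hcd : c ≤ d) :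
    interpF α γ d - interpF α γ c ≤
      α * γ * (1 - α) ^ (-γ - 1) * (d - c) / ((c + 1) * (d + 1)) := by
  have hd := hc.trans hcd
  have hbound := integral_mul_weight_le (γ := γ) (g := fun u => u ^ c - u ^ d) hα hα1
    (by linarith) (((continuous_rpow_const hc).sub (continuous_rpow_const hd)).continuousOn)
    fun u hu => sub_nonneg.2 (rpow_le_rpow_of_exponent_ge hu.1 hu.2.le hcd)
  rw [integral_Ioo_zero_one_rpow_sub_rpow hc hd] at hbound
  rw [interpF_sub_interpF hα1 hc hd, mul_assoc (α * γ), mul_div_assoc, mul_div_assoc]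
  exact mul_le_mul_of_nonneg_left hbound (mul_nonneg hα hγ)

theorem one_le_interpF (hα : 0 < α) (hα1 : α < 1) (hγ : 0 < γ) (hc : 0 ≤ c) :
    1 ≤ interpF α γ c := by
  have := interpF_sub_interpF_nonneg (γ := γ) hα.le hα1 hγ.le le_rfl hc
  rw [interpF_zero hα.ne' hα1 hγ.ne'] at this
  linarith

theorem le_interpF (hα : 0 ≤ α) (hα1 : α < 1) (hγ : 0 ≤ γ) (hc : 0 ≤ c) :
    (1 - α) ^ (-γ - 1) * (1 - α - α * γ / (c + 1)) ≤ interpF α γ c := by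
  have hbound := integral_mul_weight_le (γ := γ) hα hα1 (by linarith)
    (continuous_rpow_const hc).continuousOn fun u hu => rpow_nonneg hu.1.le c
  rw [integral_Ioo_zero_one_rpow (by linarith)] at hbound
  have hpow : (1 - α) ^ (-γ) = (1 - α) ^ (-γ - 1) * (1 - α) := by
    rw [rpow_sub_one (by linarith), div_mul_cancel₀ _ (by linarith)]
  have hsplit : (1 - α) ^ (-γ - 1) * (1 - α - α * γ / (c + 1)) =
      (1 - α) ^ (-γ - 1) * (1 - α) - α * γ * ((1 - α) ^ (-γ - 1) * (1 / (c + 1))) := by ring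
  rw [interpF, hpow, hsplit]
  linarith [mul_le_mul_of_nonneg_left hbound (mul_nonneg hα hγ)]

end interpF

section natIndex

variable {α γ : ℝ}

theorem abs_interpF_div_sub_one_le (hα : 0 < α) (hα1 : α < 1) (hγ : 0 < γ) (j l : ℕ)
    (hB : 0 < 1 - α * (1 + γ) + j * γ * (1 - α)) :
    |interpF α γ ((j + l : ℕ) * γ) / interpF α γ (j * γ) - 1| ≤
      α * γ ^ 2 * l / ((1 + (j + l) * γ) * (1 - α * (1 + γ) + j * γ * (1 - α))) := by
  have hc : (0 : ℝ) ≤ j * γ := by positivity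
  have hcd : (j : ℝ) * γ ≤ (j + l : ℕ) * γ := by gcongr; omega
  have hA : 0 < (1 - α) ^ (-γ - 1) := rpow_pos_of_pos (by linarith) _
  have hL : 0 < (1 - α) ^ (-γ - 1) * (1 - α - α * γ / (j * γ + 1)) := by
    have : 1 - α - α * γ / (j * γ + 1) = (1 - α * (1 + γ) + j * γ * (1 - α)) / (j * γ + 1) := by
      field_simp
      ring
    rw [this]
    positivity
  refine (abs_div_sub_one_le hL (le_interpF hα.le hα1 hγ.le hc)
    (interpF_sub_interpF_nonneg hα.le hα1 hγ.le hc hcd)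
    (interpF_sub_interpF_le hα.le hα1 hγ.le hc hcd)).trans_eq ?_
  push_cast
  field_simp
  ring

theorem abs_interpF_div_sub_one_le_div_sq (hα : 0 < α) (hα1 : α < 1) (hγ : 0 < γ) {j : ℕ}
    (hj : 1 ≤ j) (l : ℕ) :
    |interpF α γ ((j + l : ℕ) * γ) / interpF α γ (j * γ) - 1| ≤
      α * (1 - α) ^ (-γ - 1) * l / (j : ℝ) ^ 2 := by
  have hc : (0 : ℝ) ≤ j * γ := by positivity
  have hcd : (j : ℝ) * γ ≤ (j + l : ℕ) * γ := by gcongr; omega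
  have hj' : (1 : ℝ) ≤ j := by exact_mod_cast hj
  refine (abs_div_sub_one_le one_pos (one_le_interpF hα hα1 hγ hc)
    (interpF_sub_interpF_nonneg hα.le hα1 hγ.le hc hcd)
    (interpF_sub_interpF_le hα.le hα1 hγ.le hc hcd)).trans ?_
  push_cast
  rw [div_one, div_le_div_iff₀ (by positivity) (by positivity)]
  have hsq : ((j : ℝ) * γ) ^ 2 ≤ (j * γ + 1) * ((j + l) * γ + 1) := by
    nlinarith [mul_nonneg (Nat.cast_nonneg l) hγ.le]
  calc α * γ * (1 - α) ^ (-γ - 1) * ((j + l) * γ - j * γ) * (j : ℝ) ^ 2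
      = α * (1 - α) ^ (-γ - 1) * l * ((j : ℝ) * γ) ^ 2 := by ring
    _ ≤ α * (1 - α) ^ (-γ - 1) * l * ((j * γ + 1) * ((j + l) * γ + 1)) := by gcongr

end natIndex

theorem F_ratio_bound_and_product_convergence (γ α : ℝ) (hγ : 0 < γ) (hα : 0 < α) (hα1 : α < 1)
    (l : ℕ)
    (F : ℕ → ℝ)
    (hF : ∀ j : ℕ, F j =
      (1 - α) ^ (-γ) - α * γ * ∫ u in Set.Ioo (0 : ℝ) 1, u ^ (j * γ) * (1 - α * u) ^ (-γ - 1)) :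
    (∀ j : ℕ, 1 ≤ j → 0 < 1 - α * (1 + γ) + j * γ * (1 - α) →
        |F (j + l) / F j - 1| ≤
          α * γ ^ 2 * l / ((1 + (j + l) * γ) * (1 - α * (1 + γ) + j * γ * (1 - α)))) ∧
    (∃ C : ℝ, ∀ j : ℕ, 1 ≤ j → |F (j + l) / F j - 1| ≤ C / (j : ℝ) ^ 2) ∧
    (∃ P : ℝ, P ≠ 0 ∧
      Tendsto (fun N : ℕ => ∏ j ∈ Finset.Icc 1 N, F (j + l) / F j) atTop (nhds P)) := by
  obtain rfl : F = fun j : ℕ => interpF α γ (j * γ) := funext hF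
  have hsq := fun j (hj : 1 ≤ j) => abs_interpF_div_sub_one_le_div_sq hα hα1 hγ hj l
  refine ⟨fun j _ hB => abs_interpF_div_sub_one_le hα hα1 hγ j l hB, ⟨_, hsq⟩,
    exists_tendsto_prod_Icc_one_ne_zero (fun j _ => ?_) hsq⟩
  exact div_pos (one_pos.trans_le (one_le_interpF hα hα1 hγ (by positivity)))
    (one_pos.trans_le (one_le_interpF hα hα1 hγ (by positivity)))
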